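/- arXiv:1502.03622 — 9 statements merged into one kernel-verified Lean document; each statement's English description precedes it below -/
import Mathlib

section
/- Classical bar induction: Let Q be a predicate on finite sequences of natural numbers. If (1) for every α : ℕ → ℕ there exists n such that Q holds of the initial segment (α 0, …, α (n−1)), and (2) for every finite sequence t, if Q(t ++ [x]) holds for every x : ℕ then Q(t) holds, then Q holds of the empty sequence. -/
/-!
If `Q []` failed, the inductive hypothesis would let every sequence outside `Q` be extended by
one entry while staying outside `Q`. Iterating a choice of such extensions (dependent choice)
yields `α` none of whose initial segments lies in `Q`, contradicting the bar hypothesis.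
-/

/-- Initial segment ᾱn = [α 0, …, α (n−1)]. -/
def initSeg (α : ℕ → ℕ) (n : ℕ) : List ℕ := (List.range n).map α

theorem initSeg_succ (α : ℕ → ℕ) (n : ℕ) : initSeg α (n + 1) = initSeg α n ++ [α n] := by
  simp [initSeg, List.range_succ]

def extendBy (f : List ℕ → ℕ) : ℕ → List ℕ
  | 0 => []
  | n + 1 => extendBy f n ++ [f (extendBy f n)]

theorem initSeg_extendBy (f : List ℕ → ℕ) (n : ℕ) :
    initSeg (fun k => f (extendBy f k)) n = extendBy f n := by
  induction n with
  | zero => rfl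
  | succ n ih => rw [initSeg_succ, ih, extendBy]

theorem exists_forall_initSeg_of_forall_exists_append (P : List ℕ → Prop) (hnil : P [])
    (hstep : ∀ t, P t → ∃ x, P (t ++ [x])) : ∃ α : ℕ → ℕ, ∀ n, P (initSeg α n) := by
  choose! f hf using hstep
  refine ⟨fun k => f (extendBy f k), fun n => ?_⟩
  rw [initSeg_extendBy]
  induction n with
  | zero => exact hnil
  | succ n ih => exact hf _ ih

/-- Classical bar induction. -/
theorem bar_induction (Q : List ℕ → Prop)
    (hbar : ∀ α : ℕ → ℕ, ∃ n, Q (initSeg α n))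
    (hind : ∀ t : List ℕ, (∀ x : ℕ, Q (t ++ [x])) → Q t) :
    Q [] := by
  by_contra hQ
  obtain ⟨α, hα⟩ := exists_forall_initSeg_of_forall_exists_append (fun t => ¬ Q t) hQ
    fun t ht => not_forall.mp (mt (hind t) ht)
  obtain ⟨n, hn⟩ := hbar α
  exact hα n hn
end

section
/- Every pointwise continuous functional on Baire space is uniformly continuous on Cantor space: if Y : (ℕ → ℕ) → ℕ satisfies ∀ f, ∃ N, ∀ g, (∀ i < N, f i = g i) → Y f = Y g, then there exists N₀ such that for all f, g : ℕ → ℕ with f i ≤ 1 and g i ≤ 1 for all i, if f i = g i for all i < N₀ then Y f = Y g. -/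
/-! Cylinders `PiNat.cylinder x n` are open, so the cylinders on which `Y` is constant cover the
compact Cantor space; a finite subcover has a longest cylinder length `N₀`, and every cylinder of
length `N₀` around a point of Cantor space lies inside one of the covering cylinders. -/

open PiNat

section

variable {E : ℕ → Type*} [∀ n, TopologicalSpace (E n)] [∀ n, DiscreteTopology (E n)]

/-- A Lebesgue number lemma for cylinders. -/
theorem IsCompact.exists_cylinder_subset_cylinder {K : Set (∀ n, E n)} (hK : IsCompact K)
    (N : (∀ n, E n) → ℕ) : ∃ N₀, ∀ x ∈ K, ∃ y, cylinder x N₀ ⊆ cylinder y (N y) := by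
  obtain ⟨t, ht⟩ := hK.elim_finite_subcover (fun y => cylinder y (N y))
    (fun y => isOpen_cylinder E y (N y)) fun x _ => Set.mem_iUnion.2 ⟨x, self_mem_cylinder x _⟩
  refine ⟨t.sup N, fun x hx => ?_⟩
  obtain ⟨y, hyt, hxy⟩ := Set.mem_iUnion₂.1 (ht hx)
  rw [mem_cylinder_iff_eq] at hxy
  exact ⟨y, hxy ▸ cylinder_anti x (Finset.le_sup hyt)⟩

theorem IsCompact.exists_forall_cylinder_eq {β : Type*} {K : Set (∀ n, E n)} (hK : IsCompact K)
    {Y : (∀ n, E n) → β} (hY : ∀ x, ∃ n, ∀ y ∈ cylinder x n, Y y = Y x) :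
    ∃ N₀, ∀ x ∈ K, ∀ y ∈ cylinder x N₀, Y y = Y x := by
  choose N hN using hY
  obtain ⟨N₀, hN₀⟩ := hK.exists_cylinder_subset_cylinder N
  refine ⟨N₀, fun x hx y hy => ?_⟩
  obtain ⟨z, hxz⟩ := hN₀ x hx
  rw [hN z y (hxz hy), hN z x (hxz (self_mem_cylinder x N₀))]

end

/-- Every pointwise continuous functional on Baire space is uniformly
continuous on Cantor space. -/
theorem uniform_continuity_on_cantor (Y : (ℕ → ℕ) → ℕ)
    (hY : ∀ f : ℕ → ℕ, ∃ N, ∀ g : ℕ → ℕ, (∀ i < N, f i = g i) → Y f = Y g) :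
    ∃ N₀ : ℕ, ∀ f g : ℕ → ℕ, (∀ i, f i ≤ 1) → (∀ i, g i ≤ 1) →
      (∀ i < N₀, f i = g i) → Y f = Y g := by
  have hcantor : IsCompact (Set.univ.pi fun _ : ℕ => Set.Iic 1) :=
    isCompact_univ_pi fun _ => (Set.finite_Iic 1).isCompact
  have hYcyl : ∀ f, ∃ n, ∀ g ∈ cylinder f n, Y g = Y f := fun f =>
    (hY f).imp fun n hn g hg => (hn g fun i hi => (mem_cylinder_iff.1 hg i hi).symm).symm
  obtain ⟨N₀, hN₀⟩ := hcantor.exists_forall_cylinder_eq hYcyl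
  exact ⟨N₀, fun f g hf _ hfg =>
    (hN₀ f (fun i _ => hf i) g (mem_cylinder_iff.2 fun i hi => (hfg i hi).symm)).symm⟩
end

section
/- Weak König's lemma: if T is a set of finite binary sequences closed under initial segments which contains sequences of every length, then there exists α : ℕ → ℕ with α i ≤ 1 for all i such that every initial segment of α belongs to T. -/
lemma List.finite_length_eq_of_forall_mem {β : Type*} {S : Set β} (hS : S.Finite) (n : ℕ) :
    {l : List β | l.length = n ∧ ∀ x ∈ l, x ∈ S}.Finite := by
  have : Finite S := hS
  refine ((List.finite_length_eq S n).image List.unattach).subset ?_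
  rintro l ⟨rfl, hl⟩
  exact ⟨l.attachWith (· ∈ S) hl, by simp, List.unattach_attachWith⟩

lemma exists_map_range_eq_of_take_eq {β : Type*} (f : ℕ → List β)
    (hlen : ∀ n, (f n).length = n) (htake : ∀ i n, i ≤ n → (f n).take i = f i) :
    ∃ α : ℕ → β, ∀ n, (List.range n).map α = f n := by
  refine ⟨fun i => (f (i + 1))[i]'(by simp [hlen]), fun n => List.ext_getElem (by simp [hlen]) ?_⟩
  intro i hi hi'
  simp only [List.getElem_map, List.getElem_range]
  simp [← htake (i + 1) n (by simpa [hlen] using hi')]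

theorem exists_map_range_mem_of_finite_levels {β : Type*} (T : Set (List β))
    (hclosed : ∀ s ∈ T, ∀ t : List β, t <+: s → t ∈ T)
    (hfin : ∀ n : ℕ, {s ∈ T | s.length = n}.Finite)
    (hinf : ∀ n : ℕ, ∃ s ∈ T, s.length = n) :
    ∃ α : ℕ → β, ∀ n : ℕ, (List.range n).map α ∈ T := by
  let Level (n : ℕ) : Type _ := {s ∈ T | s.length = n}
  have : ∀ n, Finite (Level n) := fun n => (hfin n).to_subtype
  have : ∀ n, Nonempty (Level n) := fun n => (hinf n).elim fun s hs => ⟨⟨s, hs⟩⟩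
  let restrict {i j : ℕ} (hij : i ≤ j) (s : Level j) : Level i :=
    ⟨s.1.take i, hclosed _ s.2.1 _ (List.take_prefix i _), by simp [s.2.2, hij]⟩
  obtain ⟨f, hf⟩ := exists_seq_forall_proj_of_forall_finite restrict
    (fun i s => Subtype.ext (List.take_of_length_le s.2.2.le))
    (fun i j k hij hjk s => Subtype.ext (by simp [restrict, List.take_take, hij]))
    (fun i s => Set.toFinite _)
  obtain ⟨α, hα⟩ := exists_map_range_eq_of_take_eq (fun n => (f n).1) (fun n => (f n).2.2)
    (fun i n hin => congrArg Subtype.val (hf hin))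
  exact ⟨α, fun n => hα n ▸ (f n).2.1⟩

/-- Weak König's lemma: an infinite binary tree has a path. -/
theorem weak_koenig_lemma (T : Set (List ℕ))
    (hbin : ∀ s ∈ T, ∀ x ∈ s, x ≤ 1)
    (hclosed : ∀ s ∈ T, ∀ t : List ℕ, t <+: s → t ∈ T)
    (hinf : ∀ n : ℕ, ∃ β ∈ T, β.length = n) :
    ∃ α : ℕ → ℕ, (∀ i, α i ≤ 1) ∧ ∀ n : ℕ, initSeg α n ∈ T := by
  have hfin (n : ℕ) : {s ∈ T | s.length = n}.Finite :=
    (List.finite_length_eq_of_forall_mem (Set.finite_Iic 1) n).subset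
      fun s hs => ⟨hs.2, hbin s hs.1⟩
  obtain ⟨α, hα⟩ := exists_map_range_mem_of_finite_levels T hclosed hfin hinf
  exact ⟨α, fun i => hbin _ (hα (i + 1)) _ (List.mem_map_of_mem (by simp)), hα⟩
end

section
/- Construction of the special fan functional from the fan functional: suppose Ω : ((ℕ → ℕ) → ℕ) → ℕ satisfies that for all Y and all binary f, g agreeing up to Ω(Y), Y f = Y g. Given g : (ℕ → ℕ) → ℕ, let k := max over binary strings σ of length Ω(g) of g(σ ++ 0^ω), and let W be the (finite) set of sequences τ ++ 0^ω for binary τ of length k. Then for every set T of finite binary sequences closed under prefixes: if for every α ∈ W one has the initial segment of α of length g(α) not in T, then for every binary β : ℕ → ℕ there is i ≤ k such that the initial segment of β of length i is not in T. -/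
/-- Extension of a finite binary sequence given by a function on `Fin n` by zeros. -/
def finExt {n : ℕ} (σ : Fin n → Fin 2) : ℕ → ℕ :=
  fun i => if h : i < n then (σ ⟨i, h⟩ : ℕ) else 0

def IsFanFunctional (Ω : ((ℕ → ℕ) → ℕ) → ℕ) : Prop :=
  ∀ Y : (ℕ → ℕ) → ℕ, ∀ f g : ℕ → ℕ, (∀ i, f i ≤ 1) → (∀ i, g i ≤ 1) →
    (∀ i < Ω Y, f i = g i) → Y f = Y g

def binTrunc (α : ℕ → ℕ) (n : ℕ) : Fin n → Fin 2 := fun i => Fin.ofNat 2 (α i)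

theorem initSeg_congr {α β : ℕ → ℕ} {n : ℕ} (h : ∀ j < n, α j = β j) :
    initSeg α n = initSeg β n :=
  List.map_congr_left fun j hj => h j (List.mem_range.mp hj)

theorem finExt_le_one {n : ℕ} (σ : Fin n → Fin 2) (i : ℕ) : finExt σ i ≤ 1 := by
  unfold finExt
  split
  · exact Fin.is_le _
  · exact zero_le_one

theorem finExt_binTrunc_of_lt {α : ℕ → ℕ} (hα : ∀ i, α i ≤ 1) {n i : ℕ} (hi : i < n) :
    finExt (binTrunc α n) i = α i := by
  simp only [finExt, hi, dif_pos, binTrunc, Fin.val_ofNat]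
  exact Nat.mod_eq_of_lt (Nat.lt_succ_of_le (hα i))

theorem apply_le_sup_finExt {Ω : ((ℕ → ℕ) → ℕ) → ℕ} (hΩ : IsFanFunctional Ω)
    (g : (ℕ → ℕ) → ℕ) {α : ℕ → ℕ} (hα : ∀ i, α i ≤ 1) :
    g α ≤ Finset.univ.sup (fun σ : Fin (Ω g) → Fin 2 => g (finExt σ)) := by
  have hg : g α = g (finExt (binTrunc α (Ω g))) :=
    hΩ g _ _ hα (finExt_le_one _) fun i hi => (finExt_binTrunc_of_lt hα hi).symm
  rw [hg]
  exact Finset.le_sup (f := fun σ : Fin (Ω g) → Fin 2 => g (finExt σ)) (Finset.mem_univ _)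

/-- Construction of the special fan functional from the fan functional `Ω`. -/
theorem special_fan_from_fan (Ω : ((ℕ → ℕ) → ℕ) → ℕ)
    (hΩ : ∀ Y : (ℕ → ℕ) → ℕ, ∀ f g : ℕ → ℕ, (∀ i, f i ≤ 1) → (∀ i, g i ≤ 1) →
      (∀ i < Ω Y, f i = g i) → Y f = Y g)
    (g : (ℕ → ℕ) → ℕ) :
    let k : ℕ := Finset.univ.sup (fun σ : Fin (Ω g) → Fin 2 => g (finExt σ))
    let W : Set (ℕ → ℕ) := {α | ∃ τ : Fin k → Fin 2, α = finExt τ}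
    ∀ T : Set (List ℕ),
      (∀ s ∈ T, ∀ x ∈ s, x ≤ 1) →
      (∀ s ∈ T, ∀ t : List ℕ, t <+: s → t ∈ T) →
      (∀ α ∈ W, initSeg α (g α) ∉ T) →
      ∀ β : ℕ → ℕ, (∀ i, β i ≤ 1) → ∃ i ≤ k, initSeg β i ∉ T := by
  intro k W T _ _ hW β hβ
  set α := finExt (binTrunc β k)
  have hk : g α ≤ k := apply_le_sup_finExt hΩ g (finExt_le_one _)
  refine ⟨g α, hk, ?_⟩
  rw [initSeg_congr fun j hj => (finExt_binTrunc_of_lt hβ (hj.trans_le hk)).symm]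
  exact hW α ⟨_, rfl⟩
end

section
/- Stabilization of the canonical approximation: let Y : (ℕ → ℕ) → ℕ be pointwise continuous on Baire space. Define G(Y, s, N) by recursion on N − |s|: G(Y, s, N) = Y(s ++ 0^ω) if |s| ≥ N, and otherwise G(Y, s, N) = Y(β) where β is the infinite sequence given by β i = s i for i < |s|, β(|s|) = 0, and β(|s| + 1 + n) = G(Y, s ++ [n+1], N). Then for every finite sequence s there exists K such that G(Y, s, N) = G(Y, s, M) for all N, M ≥ K. -/
/-!
Classical bar induction on the tree of finite sequences extending `s`. A node `t` is good when
`N ↦ G Y t N` is eventually constant. Every infinite path through the tree has a good prefix: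
once `t` is longer than a modulus of continuity of `Y` at the path, every `G Y t N` is `Y`
applied to a sequence agreeing with the path up to that modulus. Goodness is inherited from the
children `t ++ [m + 1]`: if they stabilize at values `v m`, continuity of `Y` at the sequence built
from `t` and the `v m` leaves only finitely many children to wait for.
-/

/-- Extension of a finite sequence by zeros. -/
def ext0 (s : List ℕ) : ℕ → ℕ := fun i => s.getD i 0

/-- The canonical approximation `G` of the Gandy–Hyland functional. -/
def G (Y : (ℕ → ℕ) → ℕ) (s : List ℕ) (N : ℕ) : ℕ :=
  if _h : s.length ≥ N then Y (ext0 s)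
  else Y (fun i =>
    if i < s.length then s.getD i 0
    else if i = s.length then 0
    else G Y (s ++ [i - s.length]) N)
termination_by N - s.length
decreasing_by
  simp only [List.length_append, List.length_singleton]
  omega

open Filter

theorem List.bar_induction {α : Type*} {P : List α → Prop}
    (bar : ∀ f : ℕ → α, ∃ n, P ((List.range n).map f))
    (hered : ∀ t, (∀ a, P (t ++ [a])) → P t) : P [] := by
  by_contra h₀
  have step : ∀ t : {t // ¬ P t}, ∃ a, ¬ P (t.1 ++ [a]) := fun ⟨t, ht⟩ => by
    by_contra! h
    exact ht (hered t h)
  choose next hnext using step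
  let path : ℕ → {t // ¬ P t} := fun n => n.rec ⟨[], h₀⟩ fun _ t => ⟨t.1 ++ [next t], hnext t⟩
  have path_eq : ∀ n, (path n).1 = (List.range n).map (fun k => next (path k)) := by
    intro n
    induction n with
    | zero => rfl
    | succ n ih => simp only [List.range_succ, List.map_append, ← ih]; rfl
  obtain ⟨n, hn⟩ := bar fun k => next (path k)
  exact (path n).2 (path_eq n ▸ hn)

theorem List.getD_append_map_range {α : Type*} (s : List α) (f : ℕ → α) (d : α) {n i : ℕ}
    (hi : i < s.length + n) :
    (s ++ (List.range n).map f).getD i d =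
      if i < s.length then s.getD i d else f (i - s.length) := by
  split_ifs with h
  · exact List.getD_append _ _ _ _ h
  · rw [List.getD_append_right _ _ _ _ (by omega)]
    simp [List.getD_eq_getElem?_getD, List.getElem?_range (by omega : i - s.length < n)]

/-- The sequence `t ++ 0 :: c` at which `G Y t N` evaluates `Y` when `t.length < N`. -/
def branch (t : List ℕ) (c : ℕ → ℕ) : ℕ → ℕ := fun i =>
  if i < t.length then t.getD i 0 else if i = t.length then 0 else c (i - t.length - 1)

lemma branch_of_lt {t : List ℕ} {i : ℕ} (c : ℕ → ℕ) (hi : i < t.length) :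
    branch t c i = t.getD i 0 := if_pos hi

lemma branch_of_length_lt {t : List ℕ} {i : ℕ} (c : ℕ → ℕ) (hi : t.length < i) :
    branch t c i = c (i - t.length - 1) := by
  simp only [branch, if_neg (by omega : ¬ i < t.length), if_neg hi.ne']

section G

variable {Y : (ℕ → ℕ) → ℕ}

lemma G_of_le_length {t : List ℕ} {N : ℕ} (h : N ≤ t.length) : G Y t N = Y (ext0 t) := by
  rw [G, dif_pos h]

lemma G_of_length_lt {t : List ℕ} {N : ℕ} (h : t.length < N) :
    G Y t N = Y (branch t fun m => G Y (t ++ [m + 1]) N) := by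
  rw [G, dif_neg (by omega)]
  congr 1; funext i
  simp only [branch]
  split_ifs <;> first | rfl | congr 3; omega

lemma G_eq_of_getD_eq {f : ℕ → ℕ} {n : ℕ} (hf : ∀ g, (∀ i < n, f i = g i) → Y f = Y g)
    {t : List ℕ} (hn : n ≤ t.length) (ht : ∀ i < t.length, t.getD i 0 = f i) (N : ℕ) :
    G Y t N = Y f := by
  rcases le_or_gt N t.length with h | h
  · rw [G_of_le_length h]
    exact (hf _ fun i hi => (ht i (by omega)).symm).symm
  · rw [G_of_length_lt h]
    exact (hf _ fun i hi => by rw [branch_of_lt _ (by omega), ht i (by omega)]).symm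

lemma exists_eventuallyConst_G_append_map_range
    (hY : ∀ f : ℕ → ℕ, ∃ N, ∀ g : ℕ → ℕ, (∀ i < N, f i = g i) → Y f = Y g)
    (s : List ℕ) (f : ℕ → ℕ) :
    ∃ n, EventuallyConst (G Y (s ++ (List.range n).map f)) atTop := by
  let path : ℕ → ℕ := fun i => if i < s.length then s.getD i 0 else f (i - s.length)
  obtain ⟨n, hn⟩ := hY path
  have agree : ∀ i < (s ++ (List.range n).map f).length,
      (s ++ (List.range n).map f).getD i 0 = path i := fun i hi =>
    List.getD_append_map_range s f 0 (by simpa using hi)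
  exact ⟨n, funext (G_eq_of_getD_eq hn (by simp) agree) ▸ .const (Y path)⟩

lemma eventuallyConst_G_of_forall_append
    (hY : ∀ f : ℕ → ℕ, ∃ N, ∀ g : ℕ → ℕ, (∀ i < N, f i = g i) → Y f = Y g) {t : List ℕ}
    (h : ∀ m, EventuallyConst (G Y (t ++ [m + 1])) atTop) : EventuallyConst (G Y t) atTop := by
  choose v hv using fun m => eventuallyConst_iff_exists_eventuallyEq.1 (h m)
  obtain ⟨n, hn⟩ := hY (branch t v)
  have children : ∀ᶠ N in atTop, ∀ m ∈ Finset.range n, G Y (t ++ [m + 1]) N = v m :=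
    (eventually_all_finset _).2 fun m _ => hv m
  refine eventuallyConst_iff_exists_eventuallyEq.2 ⟨Y (branch t v), ?_⟩
  filter_upwards [children, eventually_gt_atTop t.length] with N hN hlt
  rw [G_of_length_lt hlt]
  refine (hn _ fun i hi => ?_).symm
  rcases lt_trichotomy i t.length with h | rfl | h
  · rw [branch_of_lt _ h, branch_of_lt _ h]
  · simp [branch]
  · rw [branch_of_length_lt _ h, branch_of_length_lt _ h, hN _ (Finset.mem_range.2 (by omega))]

end G

/-- Stabilization of the canonical approximation for pointwise continuous `Y`. -/
theorem G_stabilizes (Y : (ℕ → ℕ) → ℕ)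
    (hY : ∀ f : ℕ → ℕ, ∃ N, ∀ g : ℕ → ℕ, (∀ i < N, f i = g i) → Y f = Y g)
    (s : List ℕ) :
    ∃ K : ℕ, ∀ N M : ℕ, K ≤ N → K ≤ M → G Y s N = G Y s M := by
  -- `G` only recurses into children `t ++ [m + 1]`, so bar induction runs over the labels `m`.
  have hs : EventuallyConst (G Y (s ++ ([] : List ℕ).map Nat.succ)) atTop :=
    List.bar_induction (P := fun u => EventuallyConst (G Y (s ++ u.map Nat.succ)) atTop)
      (fun f => by simpa [List.map_map] using
        exists_eventuallyConst_G_append_map_range hY s (Nat.succ ∘ f))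
      (fun u hu => eventuallyConst_G_of_forall_append hY fun m => by simpa using hu m)
  rw [List.map_nil, List.append_nil] at hs
  obtain ⟨K, hK⟩ := eventuallyConst_atTop.1 hs
  exact ⟨K, fun N M hN hM => (hK N hN).trans (hK M hM).symm⟩
end

section
/- Existence of the Gandy–Hyland functional on continuous arguments: for every pointwise continuous Y : (ℕ → ℕ) → ℕ there exists Γ_Y : List ℕ → ℕ such that for all finite sequences s, Γ_Y(s) = Y(β) where β i = s i for i < |s|, β(|s|) = 0, and β(|s| + 1 + n) = Γ_Y(s ++ [n+1]). -/
/-!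
`Γ` is the limit of the approximations `Γ₀ s = Y (s ++ 0^ω)`, `Γₖ₊₁ s = Y (ghSeq Γₖ s)`.
The values `Γₖ s` become constant in `k` as soon as they do at every child `s ++ [m+1]`,
because `Y` only reads finitely many entries of `ghSeq Γₖ s`. Were they not eventually constant
at some node, this would give an infinite branch of such nodes; but `Y` is constant on a
neighbourhood of that branch, and at a node lying in it every `Γₖ` takes that constant value,
since `Γₖ t` is `Y` applied to a sequence extending `t`.
The same finiteness argument shows that the limit satisfies the Gandy–Hyland equation.
-/

/-- The infinite sequence `β` associated to `Γ` and `s` in the Gandy–Hyland equation: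
`β i = s i` for `i < |s|`, `β |s| = 0`, and `β (|s| + 1 + n) = Γ (s ++ [n+1])`. -/
def ghSeq (Γ : List ℕ → ℕ) (s : List ℕ) : ℕ → ℕ := fun i =>
  if i < s.length then s.getD i 0
  else if i = s.length then 0
  else Γ (s ++ [i - s.length])

open Filter Topology

lemma Filter.EventuallyConst.eventually_eq_limUnder {α X : Type*} [TopologicalSpace X]
    [DiscreteTopology X] [Nonempty X] {l : Filter α} [l.NeBot] {f : α → X}
    (h : EventuallyConst f l) :
    ∀ᶠ a in l, f a = limUnder l f := by
  obtain ⟨c, hc⟩ := h.exists_tendsto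
  have hc' : Tendsto f l (𝓝 c) := by rwa [nhds_discrete]
  rw [hc'.limUnder_eq]
  exact tendsto_pure.1 hc

lemma eventually_apply_eq_of_modulus {ι : Type*} {l : Filter ι} {Y : (ℕ → ℕ) → ℕ} {f : ℕ → ℕ}
    (hY : ∃ N, ∀ g : ℕ → ℕ, (∀ i < N, f i = g i) → Y f = Y g) {F : ι → ℕ → ℕ}
    (hF : ∀ i, ∀ᶠ k in l, F k i = f i) :
    ∀ᶠ k in l, Y (F k) = Y f := by
  obtain ⟨N, hN⟩ := hY
  have hagree : ∀ᶠ k in l, ∀ i ∈ Finset.range N, F k i = f i :=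
    (eventually_all_finset _).2 fun i _ => hF i
  filter_upwards [hagree] with k hk
  exact (hN _ fun i hi => (hk i (Finset.mem_range.2 hi)).symm).symm

lemma ghSeq_of_lt (Γ : List ℕ → ℕ) {s : List ℕ} {i : ℕ} (hi : i < s.length) :
    ghSeq Γ s i = s.getD i 0 := by
  simp [ghSeq, hi]

lemma eventually_ghSeq_eq {ι : Type*} {l : Filter ι} {Γ : ι → List ℕ → ℕ} {Γ' : List ℕ → ℕ}
    {s : List ℕ} (h : ∀ m, ∀ᶠ k in l, Γ k (s ++ [m + 1]) = Γ' (s ++ [m + 1])) (i : ℕ) :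
    ∀ᶠ k in l, ghSeq (Γ k) s i = ghSeq Γ' s i := by
  by_cases hi : i ≤ s.length
  · exact Eventually.of_forall fun k => by grind [ghSeq]
  · obtain ⟨m, rfl⟩ : ∃ m, i = s.length + m + 1 := ⟨i - s.length - 1, by omega⟩
    filter_upwards [h m] with k hk
    have hm : s.length + m + 1 - s.length = m + 1 := by omega
    simp only [ghSeq, if_neg (show ¬ s.length + m + 1 < s.length by omega),
      if_neg (show s.length + m + 1 ≠ s.length by omega), hm, hk]

lemma exists_seq_of_forall_exists_append {P : List ℕ → Prop} {s : List ℕ} (hs : P s)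
    (h : ∀ l, P l → ∃ m, P (l ++ [m])) :
    ∃ α : ℕ → ℕ, ∀ N, ∃ l, P l ∧ N ≤ l.length ∧ ∀ i < N, l.getD i 0 = α i := by
  choose c hc using h
  let t : ℕ → {l // P l} := fun n => (fun l => ⟨l.1 ++ [c l.1 l.2], hc l.1 l.2⟩)^[n] ⟨s, hs⟩
  have t_succ : ∀ n, (t (n + 1)).1 = (t n).1 ++ [c (t n).1 (t n).2] := fun n =>
    congrArg Subtype.val (Function.iterate_succ_apply' _ n _)
  have t_length : ∀ n, n ≤ (t n).1.length := by
    intro n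
    induction n with
    | zero => exact Nat.zero_le _
    | succ n ih => simp [t_succ, ih]
  have t_prefix : ∀ n m, n ≤ m → (t n).1 <+: (t m).1 := by
    intro n m hnm
    induction m, hnm using Nat.le_induction with
    | base => exact List.prefix_refl _
    | succ m _ ih => exact ih.trans (t_succ m ▸ List.prefix_append _ _)
  refine ⟨fun i => (t (i + 1)).1.getD i 0, fun N => ⟨(t N).1, (t N).2, t_length N, ?_⟩⟩
  intro i hi
  obtain ⟨r, hr⟩ := t_prefix (i + 1) N hi
  rw [← hr, List.getD_append _ _ _ _ (t_length (i + 1))]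

section

variable (Y : (ℕ → ℕ) → ℕ)

def ghApprox : ℕ → List ℕ → ℕ
  | 0, s => Y fun i => s.getD i 0
  | k + 1, s => Y (ghSeq (ghApprox k) s)

noncomputable def ghLimit (s : List ℕ) : ℕ := limUnder atTop (ghApprox Y · s)

variable {Y}

lemma ghApprox_eq_of_cylinder {s : List ℕ} {c : ℕ}
    (h : ∀ g : ℕ → ℕ, (∀ i < s.length, g i = s.getD i 0) → Y g = c) (k : ℕ) :
    ghApprox Y k s = c := by
  cases k with
  | zero => exact h _ fun _ _ => rfl
  | succ k => exact h _ fun i hi => ghSeq_of_lt _ hi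

lemma eventually_ghApprox_succ_eq
    (hY : ∀ f : ℕ → ℕ, ∃ N, ∀ g : ℕ → ℕ, (∀ i < N, f i = g i) → Y f = Y g) {s : List ℕ}
    (hc : ∀ m, EventuallyConst (ghApprox Y · (s ++ [m + 1])) atTop) :
    ∀ᶠ k in atTop, ghApprox Y (k + 1) s = Y (ghSeq (ghLimit Y) s) :=
  eventually_apply_eq_of_modulus (hY _)
    (eventually_ghSeq_eq fun m => (hc m).eventually_eq_limUnder)

lemma eventuallyConst_ghApprox_of_children
    (hY : ∀ f : ℕ → ℕ, ∃ N, ∀ g : ℕ → ℕ, (∀ i < N, f i = g i) → Y f = Y g) {s : List ℕ}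
    (hc : ∀ m, EventuallyConst (ghApprox Y · (s ++ [m + 1])) atTop) :
    EventuallyConst (ghApprox Y · s) atTop :=
  eventuallyConst_iff_tendsto.2 ⟨_, (tendsto_add_atTop_iff_nat 1).1
    (tendsto_pure.2 (eventually_ghApprox_succ_eq hY hc))⟩

lemma eventuallyConst_ghApprox
    (hY : ∀ f : ℕ → ℕ, ∃ N, ∀ g : ℕ → ℕ, (∀ i < N, f i = g i) → Y f = Y g) (s : List ℕ) :
    EventuallyConst (ghApprox Y · s) atTop := by
  by_contra hs
  have hbad : ∀ l, ¬ EventuallyConst (ghApprox Y · l) atTop →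
      ∃ m, ¬ EventuallyConst (ghApprox Y · (l ++ [m])) atTop := by
    intro l hl
    obtain ⟨m, hm⟩ := not_forall.1 (mt (eventuallyConst_ghApprox_of_children hY) hl)
    exact ⟨m + 1, hm⟩
  obtain ⟨α, hα⟩ := exists_seq_of_forall_exists_append hs hbad
  obtain ⟨N, hN⟩ := hY α
  obtain ⟨l, hl, hlen, hlα⟩ := hα N
  have hconst : ∀ k, ghApprox Y k l = Y α := ghApprox_eq_of_cylinder fun g hg =>
    (hN g fun i hi => by rw [← hlα i hi, hg i (by omega)]).symm
  exact hl (funext hconst ▸ EventuallyConst.const (Y α))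

end

/-- Existence of the Gandy–Hyland functional on a pointwise continuous argument. -/
theorem gandy_hyland_exists (Y : (ℕ → ℕ) → ℕ)
    (hY : ∀ f : ℕ → ℕ, ∃ N, ∀ g : ℕ → ℕ, (∀ i < N, f i = g i) → Y f = Y g) :
    ∃ Γ : List ℕ → ℕ, ∀ s : List ℕ, Γ s = Y (ghSeq Γ s) := by
  refine ⟨ghLimit Y, fun s => ?_⟩
  have h_step :=
    eventually_ghApprox_succ_eq hY fun m => eventuallyConst_ghApprox hY (s ++ [m + 1])
  have h_limit := (tendsto_add_atTop_nat 1).eventually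
    (eventuallyConst_ghApprox hY s).eventually_eq_limUnder
  obtain ⟨k, hk_step, hk_limit⟩ := (h_step.and h_limit).exists
  exact hk_limit.symm.trans hk_step
end

section
/- Agreement of G on long initial segments, uniformly in N: let Y : (ℕ → ℕ) → ℕ be pointwise continuous, let s be a finite sequence and α : ℕ → ℕ. If M is a modulus of continuity of Y at the sequence s⌢α (s followed by α), then for all n ≥ M and all N, G(Y, s ++ ᾱn, N) = Y(s⌢α). -/
/-- `s⌢α`: the finite sequence `s` followed by the infinite sequence `α`. -/
def catSeq (s : List ℕ) (α : ℕ → ℕ) : ℕ → ℕ := fun i =>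
  if i < s.length then s.getD i 0 else α (i - s.length)

@[simp]
theorem length_initSeg (α : ℕ → ℕ) (n : ℕ) : (initSeg α n).length = n := by
  simp [initSeg]

theorem getD_append_initSeg (s : List ℕ) (α : ℕ → ℕ) {n i : ℕ} (hi : i < s.length + n) :
    (s ++ initSeg α n).getD i 0 = catSeq s α i := by
  by_cases hs : i < s.length
  · rw [List.getD_append _ _ _ _ hs]
    simp [catSeq, hs]
  · have hin : i - s.length < n := by omega
    rw [List.getD_append_right _ _ _ _ (not_lt.mp hs)]
    simp [catSeq, hs, initSeg, List.getD_eq_getElem?_getD, hin]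

theorem exists_extension_G_eq_apply (Y : (ℕ → ℕ) → ℕ) (t : List ℕ) (N : ℕ) :
    ∃ f : ℕ → ℕ, (∀ i < t.length, f i = t.getD i 0) ∧ G Y t N = Y f := by
  rw [G]
  split
  · exact ⟨ext0 t, fun _ _ => rfl, rfl⟩
  · exact ⟨_, fun i hi => if_pos hi, rfl⟩

theorem G_on_long_segments_general (Y : (ℕ → ℕ) → ℕ)
    (s : List ℕ) (α : ℕ → ℕ) (M : ℕ)
    (hM : ∀ g : ℕ → ℕ, (∀ i < M, catSeq s α i = g i) → Y g = Y (catSeq s α)) :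
    ∀ n : ℕ, M ≤ n → ∀ N : ℕ, G Y (s ++ initSeg α n) N = Y (catSeq s α) := by
  intro n hn N
  obtain ⟨f, hf, hG⟩ := exists_extension_G_eq_apply Y (s ++ initSeg α n) N
  rw [hG]
  refine hM f fun i hi => ?_
  have hi' : i < s.length + n := by omega
  rw [hf i (by simpa using hi'), getD_append_initSeg s α hi']

/-- Agreement of `G` on long initial segments, uniformly in `N`. -/
theorem G_on_long_segments (Y : (ℕ → ℕ) → ℕ)
    (hY : ∀ f : ℕ → ℕ, ∃ N, ∀ g : ℕ → ℕ, (∀ i < N, f i = g i) → Y f = Y g)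
    (s : List ℕ) (α : ℕ → ℕ) (M : ℕ)
    (hM : ∀ g : ℕ → ℕ, (∀ i < M, catSeq s α i = g i) → Y g = Y (catSeq s α)) :
    ∀ n : ℕ, M ≤ n → ∀ N : ℕ, G Y (s ++ initSeg α n) N = Y (catSeq s α) :=
  G_on_long_segments_general Y s α M hM
end

section
/- Uniform continuity on bounded products: let h : ℕ → ℕ, and let Y : (ℕ → ℕ) → ℕ be pointwise continuous. Then there exists N such that for all f, g : ℕ → ℕ with f i ≤ h i and g i ≤ h i for all i, if f i = g i for all i < N, then Y f = Y g. -/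
/-!
The functions bounded by `h` form the compact space `Π i, Fin (h i + 1)` (Tychonoff), on which
the cylinders `{y | ∀ i < N, y i = x i}` are open. Pointwise continuity of `Y` covers this space
by cylinders on which `Y` is constant; a finite subcover yields one uniform length `N`.
-/

open PiNat

theorem exists_uniform_cylinder_of_compactSpace {E : ℕ → Type*} {β : Type*}
    [∀ n, TopologicalSpace (E n)] [∀ n, DiscreteTopology (E n)] [CompactSpace (∀ n, E n)]
    (F : (∀ n, E n) → β) (hF : ∀ x, ∃ N, ∀ y ∈ cylinder x N, F y = F x) :
    ∃ N, ∀ x, ∀ y ∈ cylinder x N, F y = F x := by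
  choose N hN using hF
  obtain ⟨t, ht⟩ := isCompact_univ.elim_finite_subcover (fun x => cylinder x (N x))
    (fun x => isOpen_cylinder E x (N x)) fun x _ => Set.mem_iUnion.2 ⟨x, self_mem_cylinder x _⟩
  refine ⟨t.sup N, fun x y hy => ?_⟩
  obtain ⟨z, hzt, hxz⟩ : ∃ z ∈ t, x ∈ cylinder z (N z) := by simpa using ht (Set.mem_univ x)
  have hyx : y ∈ cylinder x (N z) := cylinder_anti x (Finset.le_sup hzt) hy
  have hyz : y ∈ cylinder z (N z) := by rwa [← mem_cylinder_iff_eq.1 hxz]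
  rw [hN z y hyz, hN z x hxz]

/-- Uniform continuity of a pointwise continuous functional on `{f : ∀ i, f i ≤ h i}`. -/
theorem uniform_continuity_on_bounded (h : ℕ → ℕ) (Y : (ℕ → ℕ) → ℕ)
    (hY : ∀ f : ℕ → ℕ, ∃ N, ∀ g : ℕ → ℕ, (∀ i < N, f i = g i) → Y f = Y g) :
    ∃ N : ℕ, ∀ f g : ℕ → ℕ, (∀ i, f i ≤ h i) → (∀ i, g i ≤ h i) →
      (∀ i < N, f i = g i) → Y f = Y g := by
  let val (x : ∀ i, Fin (h i + 1)) : ℕ → ℕ := fun i => x i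
  have lift (f : ℕ → ℕ) (hf : ∀ i, f i ≤ h i) : ∃ x : ∀ i, Fin (h i + 1), val x = f :=
    ⟨fun i => ⟨f i, Nat.lt_succ_of_le (hf i)⟩, rfl⟩
  obtain ⟨N, hN⟩ := exists_uniform_cylinder_of_compactSpace (Y ∘ val) fun x => by
    obtain ⟨N, hN⟩ := hY (val x)
    exact ⟨N, fun y hy => (hN (val y) fun i hi => congrArg Fin.val (hy i hi).symm).symm⟩
  refine ⟨N, fun f g hf hg hfg => ?_⟩
  obtain ⟨x, rfl⟩ := lift f hf
  obtain ⟨y, rfl⟩ := lift g hg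
  exact (hN x y fun i hi => Fin.ext (hfg i hi).symm).symm
end

section
/- Agreement of the two canonical approximations: let Y : (ℕ → ℕ) → ℕ be pointwise continuous and s a finite sequence. Define G(Y, t, N) = Y(t ++ 0^ω) if |t| ≥ N and otherwise G(Y, t, N) = Y(t, then 0, then (λ n, G(Y, t ++ [n+1], N))); define H(Y, t, N) = Y((t truncated to length N) ++ 0^ω) if |t| ≥ N, and otherwise H(Y, t, N) = Y(β) where β i = t i for i < |t|, β(|t|) = 0, β(|t| + 1 + n) = H(Y, t ++ [n+1], N) for n < N, and β(|t| + 1 + n) = 0 for n ≥ N. Then there exists K such that for all N ≥ K, G(Y, s, N) = H(Y, s, N). -/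
/-- The more finitary canonical approximation `H` of the Gandy–Hyland functional:
it truncates the sequence at length `N` in the base case and pads the child
values by zeros after index `N`. -/
def H (Y : (ℕ → ℕ) → ℕ) (s : List ℕ) (N : ℕ) : ℕ :=
  if _h : s.length ≥ N then Y (ext0 (s.take N))
  else Y (fun i =>
    if i < s.length then s.getD i 0
    else if i = s.length then 0
    else if i - s.length - 1 < N then H Y (s ++ [i - s.length]) N
    else 0)
termination_by N - s.length
decreasing_by
  simp only [List.length_append, List.length_singleton]
  omega

open Filter

/-- The sequence `t, 0, u 0, u 1, …` through which `G` and `H` recurse. -/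
def graft (t : List ℕ) (u : ℕ → ℕ) : ℕ → ℕ := fun i =>
  if i < t.length then t.getD i 0
  else if i = t.length then 0
  else u (i - t.length - 1)

theorem graft_of_lt {t : List ℕ} {i : ℕ} (u : ℕ → ℕ) (hi : i < t.length) :
    graft t u i = t.getD i 0 :=
  if_pos hi

theorem graft_congr {t : List ℕ} {u v : ℕ → ℕ} {M : ℕ}
    (h : ∀ n, t.length + 1 + n < M → u n = v n) : ∀ i < M, graft t u i = graft t v i := by
  intro i hi
  unfold graft
  split_ifs <;> first | rfl | exact h _ (by omega)

section Unfold

variable (Y : (ℕ → ℕ) → ℕ) {t : List ℕ} {N : ℕ}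

theorem G_eq_of_lt (h : t.length < N) :
    G Y t N = Y (graft t fun n => G Y (t ++ [n + 1]) N) := by
  rw [G, dif_neg (by omega)]
  congr 1
  funext i
  unfold graft
  split_ifs <;> first | rfl | congr 3; omega

theorem H_eq_of_lt (h : t.length < N) :
    H Y t N = Y (graft t fun n => if n < N then H Y (t ++ [n + 1]) N else 0) := by
  rw [H, dif_neg (by omega)]
  congr 1
  funext i
  unfold graft
  dsimp only
  split_ifs <;> first | rfl | omega | congr 3; omega

end Unfold

theorem List.IsPrefix.getD_eq {α : Type*} {t u : List α} (h : t <+: u) {i : ℕ} (hi : i < t.length)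
    (d : α) :
    t.getD i d = u.getD i d := by
  obtain ⟨w, rfl⟩ := h
  exact (List.getD_append _ _ _ _ hi).symm

theorem bar_induction_s16 {P : List ℕ → Prop}
    (hbar : ∀ f : ℕ → ℕ, ∃ m, ∀ t : List ℕ, m ≤ t.length →
      (∀ i < t.length, t.getD i 0 = f i) → P t)
    (hind : ∀ t, (∀ n, P (t ++ [n + 1])) → P t) (s : List ℕ) : P s := by
  by_contra hs
  have hstep : ∀ t : {t // ¬ P t}, ∃ n, ¬ P (t.1 ++ [n + 1]) := fun t => by
    by_contra h
    push Not at h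
    exact t.2 (hind _ h)
  choose next hnext using hstep
  let path : ℕ → {t // ¬ P t} := fun k =>
    Nat.rec ⟨s, hs⟩ (fun _ t => ⟨t.1 ++ [next t + 1], hnext t⟩) k
  have path_succ : ∀ k, (path (k + 1)).1 = (path k).1 ++ [next (path k) + 1] := fun _ => rfl
  have length_path : ∀ k, (path k).1.length = s.length + k := by
    intro k
    induction k with
    | zero => rfl
    | succ k ih => rw [path_succ, List.length_append, ih, List.length_singleton, add_assoc]
  have prefix_path : ∀ k m, k ≤ m → (path k).1 <+: (path m).1 := by
    intro k m hkm
    induction m, hkm using Nat.le_induction with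
    | base => exact List.prefix_refl _
    | succ m _ ih => exact ih.trans (path_succ m ▸ List.prefix_append _ _)
  let f : ℕ → ℕ := fun i => (path (i + 1)).1.getD i 0
  have path_agree : ∀ k, ∀ i < (path k).1.length, (path k).1.getD i 0 = f i := by
    intro k i hi
    rcases le_total k (i + 1) with h | h
    · exact (prefix_path _ _ h).getD_eq hi 0
    · exact ((prefix_path _ _ h).getD_eq (by have := length_path (i + 1); omega) 0).symm
  obtain ⟨m, hm⟩ := hbar f
  exact (path m).2 (hm _ (by have := length_path m; omega) (path_agree m))

def GHStable (Y : (ℕ → ℕ) → ℕ) (t : List ℕ) : Prop :=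
  ∃ c, ∀ᶠ N in atTop, G Y t N = c ∧ H Y t N = c

namespace GHStable

variable {Y : (ℕ → ℕ) → ℕ}

theorem of_children
    (hY : ∀ f : ℕ → ℕ, ∃ N, ∀ g : ℕ → ℕ, (∀ i < N, f i = g i) → Y f = Y g)
    (t : List ℕ) (h : ∀ n, GHStable Y (t ++ [n + 1])) : GHStable Y t := by
  choose c hc using h
  obtain ⟨M, hM⟩ := hY (graft t c)
  have children : ∀ᶠ N in atTop, ∀ n ∈ Finset.range M,
      G Y (t ++ [n + 1]) N = c n ∧ H Y (t ++ [n + 1]) N = c n :=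
    (eventually_all_finset _).2 fun n _ => hc n
  refine ⟨Y (graft t c), ((children.and (eventually_gt_atTop t.length)).and
    (eventually_ge_atTop M)).mono ?_⟩
  rintro N ⟨⟨hch, hlt⟩, hMN⟩
  rw [G_eq_of_lt Y hlt, H_eq_of_lt Y hlt]
  refine ⟨(hM _ (graft_congr fun n hn => ?_)).symm, (hM _ (graft_congr fun n hn => ?_)).symm⟩
  · exact (hch n (Finset.mem_range.2 (by omega))).1.symm
  · rw [if_pos (by omega)]
    exact (hch n (Finset.mem_range.2 (by omega))).2.symm

theorem of_agree {f : ℕ → ℕ} {m : ℕ} (hf : ∀ g : ℕ → ℕ, (∀ i < m, f i = g i) → Y f = Y g)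
    {t : List ℕ} (hm : m ≤ t.length) (ht : ∀ i < t.length, t.getD i 0 = f i) :
    GHStable Y t := by
  have graft_eq : ∀ u, Y (graft t u) = Y f := fun u =>
    (hf _ fun i hi => by rw [graft_of_lt u (by omega), ht i (by omega)]).symm
  refine ⟨Y f, (eventually_gt_atTop t.length).mono fun N hN => ?_⟩
  rw [G_eq_of_lt Y hN, H_eq_of_lt Y hN]
  exact ⟨graft_eq _, graft_eq _⟩

end GHStable

/-- Agreement of the two canonical approximations for continuous `Y`. -/
theorem G_eq_H_eventually (Y : (ℕ → ℕ) → ℕ)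
    (hY : ∀ f : ℕ → ℕ, ∃ N, ∀ g : ℕ → ℕ, (∀ i < N, f i = g i) → Y f = Y g)
    (s : List ℕ) :
    ∃ K : ℕ, ∀ N : ℕ, K ≤ N → G Y s N = H Y s N := by
  have hbar : ∀ f : ℕ → ℕ, ∃ m, ∀ t : List ℕ, m ≤ t.length →
      (∀ i < t.length, t.getD i 0 = f i) → GHStable Y t := fun f =>
    let ⟨m, hm⟩ := hY f
    ⟨m, fun _ hmt ht => GHStable.of_agree hm hmt ht⟩
  obtain ⟨c, hc⟩ := bar_induction_s16 hbar (GHStable.of_children hY) s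
  obtain ⟨K, hK⟩ := eventually_atTop.1 hc
  exact ⟨K, fun N hN => (hK N hN).1.trans (hK N hN).2.symm⟩
end
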